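/- The discrete Ricci curvatures of the Hasse diagrams of the strong Bruhat order of the exceptional Coxeter groups F_4, E_6 and H_3 satisfy Ric(H(F_4)) ≥ −28, Ric(H(E_6)) ≥ −46, and Ric(H(H_3)) ≥ −14. -/

import Mathlib

/-!
For a locally finite graph of maximal degree `D`, expanding `Γ₂(f)(x)` over the neighbours `v`
of `x` and keeping, in `Γ(f)(v) + (f x - f v) Δf(v)`, only the contribution of the edge `v x`
gives `Γ₂ ≥ (2 - D) Γ`. In the Hasse diagram of the Bruhat order the neighbours of `x` are of the
form `t x` with `t` a reflection, so `D` is at most the number of reflections: 24 for `F₄`, 36 for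
`E₆` and 15 for `H₃`. They are counted by a list of words containing the simple reflections and
closed under conjugation by them; the equalities this needs in the Coxeter group are certified
by explicit rewriting with the braid relations and with rules derived from them.
-/

/-- Graph Laplacian: `Δ(f)(x) = Σ_{v ∈ B(1,x)} (f(v) − f(x))`. -/
noncomputable def graphLap {V : Type*} (G : SimpleGraph V) (f : V → ℝ) (x : V) : ℝ :=
  ∑ᶠ v ∈ G.neighborSet x, (f v - f x)

/-- `Γ(f,g)(x) = (1/2) Σ_{v ∈ B(1,x)} (f(x) − f(v))(g(x) − g(v))`. -/
noncomputable def graphGamma {V : Type*} (G : SimpleGraph V) (f g : V → ℝ) (x : V) : ℝ :=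
  (1 / 2) * ∑ᶠ v ∈ G.neighborSet x, (f x - f v) * (g x - g v)

/-- `Γ₂(f)(x) = (1/2) Δ(Γ(f,f))(x) − Γ(f, Δ(f))(x)`. -/
noncomputable def graphGamma2 {V : Type*} (G : SimpleGraph V) (f : V → ℝ) (x : V) : ℝ :=
  (1 / 2) * graphLap G (fun y => graphGamma G f f y) x - graphGamma G f (graphLap G f) x

/-- The discrete Ricci curvature of a graph: the largest `K ∈ ℝ ∪ {−∞}` such that
`Γ₂(f)(x) ≥ K·Γ(f)(x)` for all `f` and all vertices `x`. -/
noncomputable def graphRic {V : Type*} (G : SimpleGraph V) : EReal :=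
  sSup (Real.toEReal '' {K : ℝ | ∀ (f : V → ℝ) (x : V),
    K * graphGamma G f f x ≤ graphGamma2 G f x})

/-- The local discrete Ricci curvature of a graph at a vertex `x`. -/
noncomputable def graphRicAt {V : Type*} (G : SimpleGraph V) (x : V) : EReal :=
  sSup (Real.toEReal '' {K : ℝ | ∀ f : V → ℝ,
    K * graphGamma G f f x ≤ graphGamma2 G f x})

/-- The Bruhat order on a Coxeter group: `u ≤ v` iff there is a chain
`u = w_0 → w_1 → ⋯ → w_k = v` where each step multiplies on the left by a
reflection and strictly increases the length. -/
def CoxeterSystem.bruhatLE {B : Type*} {W : Type*} [Group W] {M : CoxeterMatrix B}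
    (cs : CoxeterSystem M W) : W → W → Prop :=
  Relation.ReflTransGen (fun u v =>
    (∃ t, cs.IsReflection t ∧ v = t * u) ∧ cs.length u < cs.length v)

/-- The strict Bruhat order. -/
def CoxeterSystem.bruhatLT {B : Type*} {W : Type*} [Group W] {M : CoxeterMatrix B}
    (cs : CoxeterSystem M W) (u v : W) : Prop :=
  cs.bruhatLE u v ∧ u ≠ v

/-- `v` covers `u` in the Bruhat order. -/
def CoxeterSystem.bruhatCovBy {B : Type*} {W : Type*} [Group W] {M : CoxeterMatrix B}
    (cs : CoxeterSystem M W) (u v : W) : Prop :=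
  cs.bruhatLT u v ∧ ¬∃ θ, cs.bruhatLT u θ ∧ cs.bruhatLT θ v

/-- The Hasse diagram of the (strong) Bruhat order of a Coxeter group, as a simple
graph: `u` and `v` are adjacent iff one covers the other. -/
def CoxeterSystem.bruhatHasse {B : Type*} {W : Type*} [Group W] {M : CoxeterMatrix B}
    (cs : CoxeterSystem M W) : SimpleGraph W :=
  SimpleGraph.fromRel cs.bruhatCovBy

section Curvature

open Finset

variable {V : Type*} (G : SimpleGraph V) [G.LocallyFinite] (f : V → ℝ)

theorem graphLap_eq_sum (g : V → ℝ) (x : V) :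
    graphLap G g x = ∑ v ∈ G.neighborFinset x, (g v - g x) := by
  rw [graphLap, ← SimpleGraph.coe_neighborFinset, finsum_mem_coe_finset]

theorem graphGamma_eq_sum (g h : V → ℝ) (x : V) :
    graphGamma G g h x = 1 / 2 * ∑ v ∈ G.neighborFinset x, (g x - g v) * (h x - h v) := by
  rw [graphGamma, ← SimpleGraph.coe_neighborFinset, finsum_mem_coe_finset]

theorem graphGamma_self_eq_sum (x : V) :
    graphGamma G f f x = 1 / 2 * ∑ v ∈ G.neighborFinset x, (f x - f v) ^ 2 := by
  simp only [graphGamma_eq_sum, sq]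

theorem graphGamma_self_nonneg (x : V) : 0 ≤ graphGamma G f f x := by
  rw [graphGamma_self_eq_sum]
  positivity

theorem graphGamma2_eq_sum (x : V) :
    graphGamma2 G f x =
      ∑ v ∈ G.neighborFinset x,
          (1 / 2 * graphGamma G f f v + 1 / 2 * (f x - f v) * graphLap G f v)
        - G.degree x / 2 * graphGamma G f f x + 1 / 2 * graphLap G f x ^ 2 := by
  have hlap : ∑ v ∈ G.neighborFinset x, (f x - f v) = -graphLap G f x := by
    rw [graphLap_eq_sum, ← sum_neg_distrib]
    exact sum_congr rfl fun v _ => by ring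
  have hΓΔ : graphGamma G f (graphLap G f) x =
      1 / 2 * (-graphLap G f x * graphLap G f x
        - ∑ v ∈ G.neighborFinset x, (f x - f v) * graphLap G f v) := by
    rw [graphGamma_eq_sum, ← hlap, sum_mul, ← sum_sub_distrib]
    exact congrArg _ (sum_congr rfl fun v _ => by ring)
  rw [graphGamma2, hΓΔ, graphLap_eq_sum, sum_sub_distrib, sum_const, nsmul_eq_mul,
    sum_add_distrib, ← mul_sum, SimpleGraph.card_neighborFinset_eq_degree]
  simp only [mul_assoc, ← mul_sum]
  ring

/-- Keep only the term `w = x` of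
`Γ(f)(v) + (f x - f v) Δf(v) = Σ_{w ~ v} ((f w - 2 f v + f x)² - (f x - f v)²) / 2`. -/
theorem le_half_graphGamma_add_half_mul_graphLap {D : ℕ} (hD : ∀ v, G.degree v ≤ D) {x v : V}
    (hxv : G.Adj x v) :
    (1 - D / 4 : ℝ) * (f x - f v) ^ 2
      ≤ 1 / 2 * graphGamma G f f v + 1 / 2 * (f x - f v) * graphLap G f v := by
  have hsplit : 1 / 2 * graphGamma G f f v + 1 / 2 * (f x - f v) * graphLap G f v
      = ∑ w ∈ G.neighborFinset v, 1 / 4 * (f w - 2 * f v + f x) ^ 2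
        - G.degree v * (1 / 4 * (f x - f v) ^ 2) := by
    rw [graphGamma_eq_sum, graphLap_eq_sum, ← SimpleGraph.card_neighborFinset_eq_degree,
      ← nsmul_eq_mul, ← sum_const, mul_sum, mul_sum, mul_sum, ← sum_add_distrib,
      ← sum_sub_distrib]
    exact sum_congr rfl fun w _ => by ring
  have hx : 1 / 4 * (f x - 2 * f v + f x) ^ 2
      ≤ ∑ w ∈ G.neighborFinset v, 1 / 4 * (f w - 2 * f v + f x) ^ 2 :=
    single_le_sum (f := fun w => 1 / 4 * (f w - 2 * f v + f x) ^ 2)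
      (fun w _ => by positivity) ((G.mem_neighborFinset v x).2 hxv.symm)
  have hdeg : (G.degree v : ℝ) ≤ D := by exact_mod_cast hD v
  rw [hsplit]
  nlinarith [mul_le_mul_of_nonneg_right hdeg (sq_nonneg (f x - f v))]

theorem graphGamma2_ge_of_degree_le {D : ℕ} (hD : ∀ v, G.degree v ≤ D) (x : V) :
    (2 - D : ℝ) * graphGamma G f f x ≤ graphGamma2 G f x := by
  have hsum : (1 - D / 4 : ℝ) * (2 * graphGamma G f f x)
      ≤ ∑ v ∈ G.neighborFinset x,
          (1 / 2 * graphGamma G f f v + 1 / 2 * (f x - f v) * graphLap G f v) := by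
    rw [show 2 * graphGamma G f f x = ∑ v ∈ G.neighborFinset x, (f x - f v) ^ 2 by
      rw [graphGamma_self_eq_sum]; ring, mul_sum]
    exact sum_le_sum fun v hv =>
      le_half_graphGamma_add_half_mul_graphLap G f hD ((G.mem_neighborFinset x v).1 hv)
  have hdeg : (G.degree x : ℝ) / 2 * graphGamma G f f x ≤ D / 2 * graphGamma G f f x := by
    gcongr
    · exact graphGamma_self_nonneg G f x
    · exact_mod_cast hD x
  rw [graphGamma2_eq_sum]
  nlinarith [sq_nonneg (graphLap G f x)]

theorem le_graphRic_of_degree_le {D : ℕ} (hD : ∀ v, G.degree v ≤ D) {K : ℝ} (hK : K ≤ 2 - D) :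
    (K : EReal) ≤ graphRic G :=
  le_sSup ⟨K, fun f x => (mul_le_mul_of_nonneg_right hK (graphGamma_self_nonneg G f x)).trans
    (graphGamma2_ge_of_degree_le G f hD x), rfl⟩

end Curvature

namespace CoxeterSystem

variable {B W : Type*} [Group W] {M : CoxeterMatrix B} (cs : CoxeterSystem M W)

theorem exists_isReflection_of_bruhatCovBy {u v : W} (h : cs.bruhatCovBy u v) :
    ∃ t, cs.IsReflection t ∧ v = t * u := by
  obtain ⟨⟨hle, hne⟩, hnot⟩ := h
  rcases hle.cases_tail with rfl | ⟨θ, hθ, hstep⟩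
  · exact absurd rfl hne
  · obtain rfl | hθu := eq_or_ne θ u
    · exact hstep.1
    · refine absurd ⟨θ, ⟨hθ, hθu.symm⟩, .single hstep, ?_⟩ hnot
      rintro rfl
      exact lt_irrefl _ hstep.2

theorem exists_isReflection_of_bruhatHasse_adj {u v : W} (h : cs.bruhatHasse.Adj u v) :
    ∃ t, cs.IsReflection t ∧ v = t * u := by
  rcases (SimpleGraph.fromRel_adj _ _ _).1 h with ⟨-, hcov | hcov⟩
  · exact cs.exists_isReflection_of_bruhatCovBy hcov
  · obtain ⟨t, ht, rfl⟩ := cs.exists_isReflection_of_bruhatCovBy hcov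
    exact ⟨t, ht, by rw [← mul_assoc, ht.mul_self, one_mul]⟩

theorem le_graphRic_bruhatHasse (S : Finset W) (hS : ∀ t, cs.IsReflection t → t ∈ S) {K : ℝ}
    (hK : K ≤ 2 - S.card) : (K : EReal) ≤ graphRic cs.bruhatHasse := by
  classical
  have hsub (x : W) : cs.bruhatHasse.neighborSet x ⊆ S.image (· * x) := by
    intro v hv
    obtain ⟨t, ht, rfl⟩ := cs.exists_isReflection_of_bruhatHasse_adj hv
    exact Finset.mem_image_of_mem _ (hS t ht)
  let : cs.bruhatHasse.LocallyFinite := fun x =>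
    ((S.image (· * x)).finite_toSet.subset (hsub x)).fintype
  refine le_graphRic_of_degree_le _ (fun x => ?_) hK
  rw [← SimpleGraph.card_neighborFinset_eq_degree]
  refine (Finset.card_le_card fun v hv => hsub x ?_).trans Finset.card_image_le
  exact (cs.bruhatHasse.mem_neighborFinset x v).1 hv

theorem exists_wordProd_eq_of_isReflection {T : Set (List B)} (hsimple : ∀ i, [i] ∈ T)
    (hconj : ∀ i, ∀ w ∈ T, ∃ w' ∈ T, cs.wordProd (i :: (w ++ [i])) = cs.wordProd w')
    {t : W} (ht : cs.IsReflection t) : ∃ w ∈ T, cs.wordProd w = t := by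
  obtain ⟨u, i, rfl⟩ := ht
  obtain ⟨ω, rfl⟩ := cs.wordProd_surjective u
  induction ω with
  | nil => exact ⟨[i], hsimple i, by simp⟩
  | cons j ω ih =>
    obtain ⟨w, hw, hwt⟩ := ih
    obtain ⟨w', hw', hw't⟩ := hconj j w hw
    refine ⟨w', hw', ?_⟩
    rw [← hw't, cs.wordProd_cons, cs.wordProd_append, hwt, cs.wordProd_singleton,
      cs.wordProd_cons, mul_inv_rev, cs.inv_simple]
    group

end CoxeterSystem

namespace WordRewriting

variable {B : Type*} [DecidableEq B]

abbrev Rule (B : Type*) := List B × List B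

def rewriteAt (r : Rule B) (p : ℕ) (w : List B) : List B :=
  if (w.drop p).take r.1.length = r.1 then w.take p ++ r.2 ++ (w.drop p).drop r.1.length
  else w

def rewrite (rules : List (Rule B)) : List (ℕ × ℕ) → List B → List B
  | [], w => w
  | (k, p) :: steps, w => rewrite rules steps (rewriteAt (rules.getD k ([], [])) p w)

/-- New rules are put at the head of the list: rule indices in later steps count them first,
the most recent one first. -/
def derive (rules : List (Rule B)) : List (List B × List (ℕ × ℕ) × List (ℕ × ℕ)) → List (Rule B)
  | [] => rules
  | (w, steps, steps') :: rest =>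
    derive ((rewrite rules steps w, rewrite rules steps' w) :: rules) rest

/-- The rule `braidWord M i j → braidWord M j i` has index `n + n * i + j`. -/
def braidRules {n : ℕ} (M : CoxeterMatrix (Fin n)) : List (Rule (Fin n)) :=
  (List.finRange n).map (fun i => ([i, i], [])) ++
    (List.finRange n).flatMap fun i =>
      (List.finRange n).map fun j => (CoxeterSystem.braidWord M i j, CoxeterSystem.braidWord M j i)

def conjugates (letters : List B) (T : List (List B)) : List (List B) :=
  T.flatMap fun w => letters.map fun i => i :: (w ++ [i])

section

variable {W : Type*} [Group W] {M : CoxeterMatrix B} (cs : CoxeterSystem M W)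

def Sound (rules : List (Rule B)) : Prop :=
  ∀ r ∈ rules, cs.wordProd r.1 = cs.wordProd r.2

variable {cs}

theorem wordProd_rewriteAt {r : Rule B} (hr : cs.wordProd r.1 = cs.wordProd r.2) (p : ℕ)
    (w : List B) : cs.wordProd (rewriteAt r p w) = cs.wordProd w := by
  unfold rewriteAt
  split_ifs with h
  · conv_rhs => rw [← List.take_append_drop p w, ← List.take_append_drop r.1.length (w.drop p), h]
    simp only [cs.wordProd_append, hr, mul_assoc]
  · rfl

theorem wordProd_rewrite {rules : List (Rule B)} (h : Sound cs rules) (steps : List (ℕ × ℕ))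
    (w : List B) : cs.wordProd (rewrite rules steps w) = cs.wordProd w := by
  induction steps generalizing w with
  | nil => rfl
  | cons s steps ih =>
    obtain ⟨k, p⟩ := s
    refine (ih _).trans (wordProd_rewriteAt ?_ p w)
    by_cases hk : k < rules.length
    · rw [List.getD_eq_getElem _ _ hk]
      exact h _ (List.getElem_mem hk)
    · rw [List.getD_eq_default _ _ (not_lt.1 hk)]

theorem Sound.derive {rules : List (Rule B)} (h : Sound cs rules)
    (derivation : List (List B × List (ℕ × ℕ) × List (ℕ × ℕ))) :
    Sound cs (derive rules derivation) := by
  induction derivation generalizing rules with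
  | nil => exact h
  | cons d rest ih =>
    obtain ⟨w, steps, steps'⟩ := d
    refine ih fun r hr => ?_
    rcases List.mem_cons.1 hr with rfl | hr
    · rw [wordProd_rewrite h, wordProd_rewrite h]
    · exact h r hr

theorem exists_wordProd_eq_of_forall₂ {rules : List (Rule B)} (h : Sound cs rules)
    {T words : List (List B)} {certificate : List (List (ℕ × ℕ))}
    (hcert : List.Forall₂ (fun u steps => rewrite rules steps u ∈ T) words certificate) :
    ∀ u ∈ words, ∃ w ∈ T, cs.wordProd u = cs.wordProd w := by
  induction hcert with
  | nil => simp
  | cons hu _ ih =>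
    rintro u (_ | ⟨_, hu'⟩)
    · exact ⟨_, hu, (wordProd_rewrite h _ _).symm⟩
    · exact ih u hu'

end

theorem sound_braidRules {W : Type*} [Group W] {n : ℕ} {M : CoxeterMatrix (Fin n)}
    {cs : CoxeterSystem M W} :
    Sound cs (braidRules M) := by
  intro r hr
  simp only [braidRules, List.mem_append, List.mem_map, List.mem_flatMap, List.mem_finRange,
    true_and] at hr
  rcases hr with ⟨i, rfl⟩ | ⟨i, j, rfl⟩
  · simp [cs.wordProd_cons]
  · exact cs.wordProd_braidWord_eq i j

end WordRewriting

open WordRewriting in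
theorem le_graphRic_bruhatHasse_of_certificate {n : ℕ} (M : CoxeterMatrix (Fin n))
    (derivation : List (List (Fin n) × List (ℕ × ℕ) × List (ℕ × ℕ))) (T : List (List (Fin n)))
    (certificate : List (List (ℕ × ℕ))) (hsimple : ∀ i, [i] ∈ T)
    (hcert : List.Forall₂ (fun u steps => rewrite (derive (braidRules M) derivation) steps u ∈ T)
      (conjugates (List.finRange n) T) certificate)
    {K : ℝ} (hK : K ≤ 2 - T.length) : (K : EReal) ≤ graphRic M.toCoxeterSystem.bruhatHasse := by
  classical
  set cs := M.toCoxeterSystem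
  have hconj (i : Fin n) (w : List (Fin n)) (hw : w ∈ T) :
      ∃ w' ∈ T, cs.wordProd (i :: (w ++ [i])) = cs.wordProd w' :=
    exists_wordProd_eq_of_forall₂ (sound_braidRules.derive derivation) hcert _
      (List.mem_flatMap.2 ⟨w, hw, List.mem_map.2 ⟨i, List.mem_finRange i, rfl⟩⟩)
  refine cs.le_graphRic_bruhatHasse (T.map cs.wordProd).toFinset (fun t ht => ?_) (hK.trans ?_)
  · obtain ⟨w, hw, rfl⟩ := cs.exists_wordProd_eq_of_isReflection (T := {w | w ∈ T}) hsimple hconj ht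
    exact List.mem_toFinset.2 (List.mem_map_of_mem hw)
  · have := (List.toFinset_card_le (T.map cs.wordProd)).trans_eq (List.length_map _)
    exact sub_le_sub_left (by exact_mod_cast this) 2

/- In each `conjugationSteps`, line `k` rewrites `i :: (w ++ [i])` into a word of `reflectionWords`,
for `w` the `k`-th word of `reflectionWords` and each letter `i` in turn. -/

namespace F₄Certificate

def derivation : List (List (Fin 4) × List (ℕ × ℕ) × List (ℕ × ℕ)) := [
  ([2, 1, 2, 1, 0, 1], [(5, 3), (12, 2)], [(13, 0), (12, 3)]),
  ([3, 2, 3, 1], [(18, 2)], [(16, 0)]),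
  ([3, 2, 1, 3, 0], [(18, 3)], [(0, 0)]),
  ([3, 2, 1, 3, 2, 3], [(18, 3)], [(1, 0)]),
  ([3, 2, 1, 0, 3, 2, 3], [(19, 4)], [(1, 0)]),
  ([3, 2, 1, 0, 2, 3, 2, 1, 2, 1], [(18, 6), (22, 5)], [(0, 0), (22, 6)]),
  ([3, 2, 1, 0, 2, 3, 2, 1, 0, 2, 1, 0],
    [(5, 6), (23, 5)], [(1, 0), (23, 6), (22, 7), (5, 2), (23, 1)]),
  ([3, 2, 1, 0, 2, 1, 3, 2, 1, 2, 0], [(19, 9)], [(1, 0)]),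
  ([3, 2, 1, 0, 2, 1, 3, 2, 1, 0, 2, 1, 3, 2, 1, 2], [(2, 6)], [(1, 0), (5, 8)]),
  ([3, 2, 1, 0, 2, 1, 2, 3, 2, 1, 0, 2, 1, 3, 2, 1, 1],
    [(10, 15)], [(0, 0), (22, 13), (14, 11), (21, 10), (25, 9), (21, 8), (8, 3), (26, 2), (10, 1)]),
  ([3, 2, 1, 0, 2, 1, 2, 3, 2, 1, 0, 2, 1, 3, 2, 3], [(25, 13)], [(0, 0)])]

def reflectionWords : List (List (Fin 4)) := [
  [0], [1], [2], [3], [0, 1, 0], [1, 2, 1], [2, 1, 2], [2, 3, 2], [0, 1, 2, 1, 0], [0, 2, 1, 0, 2],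
  [1, 2, 3, 2, 1], [3, 2, 1, 2, 3], [0, 1, 2, 3, 2, 1, 0], [0, 3, 2, 1, 0, 2, 3],
  [1, 0, 2, 1, 0, 2, 1], [2, 1, 2, 3, 2, 1, 2], [0, 2, 1, 2, 3, 2, 1, 0, 2],
  [1, 0, 3, 2, 1, 0, 2, 1, 3], [1, 0, 2, 1, 2, 3, 2, 1, 0, 2, 1],
  [2, 1, 0, 3, 2, 1, 0, 2, 1, 3, 2], [1, 2, 1, 0, 3, 2, 1, 0, 2, 1, 3, 2, 1],
  [2, 1, 0, 2, 1, 2, 3, 2, 1, 0, 2, 1, 2], [0, 1, 2, 1, 0, 3, 2, 1, 0, 2, 1, 3, 2, 1, 0],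
  [3, 2, 1, 0, 2, 1, 2, 3, 2, 1, 0, 2, 1, 2, 3]]

def conjugationSteps : List (List (ℕ × ℕ)) := [
  [(11, 0)], [(16, 0)], [(23, 0), (13, 1)], [(27, 0), (14, 1)],
  [], [(12, 0)], [], [(28, 0), (14, 1)],
  [(23, 1), (11, 0)], [], [(13, 0)], [(26, 0)],
  [(27, 1), (11, 0)], [(28, 1), (12, 0)], [], [(14, 0)],
  [(11, 0), (11, 1)], [(16, 0), (11, 2), (12, 1)], [(23, 0)], [(27, 0), (28, 1), (27, 2), (14, 3)],
  [], [(12, 0), (12, 1)], [(24, 0), (13, 3)], [(28, 0), (9, 1)],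
  [(23, 3)], [(24, 1), (12, 0)], [(13, 0), (13, 1)], [],
  [(23, 3), (27, 2), (23, 1), (11, 0)], [], [(13, 0), (13, 1)], [(26, 0), (13, 2), (14, 1)],
  [(11, 0), (11, 3)], [(16, 0), (16, 4), (23, 3), (11, 2)], [(23, 0), (24, 1), (23, 4), (13, 5)],
  [(27, 0), (28, 1), (8, 2)],
  [(11, 0), (23, 3), (11, 2)], [], [(23, 0), (13, 1), (13, 3)], [(27, 0)],
  [], [(12, 0), (12, 3)], [], [(28, 0), (26, 1), (13, 3), (28, 2), (14, 3)],
  [(27, 5), (23, 4)], [(28, 5), (24, 2), (28, 1), (12, 0)], [(7, 1), (13, 0)], [(14, 0), (14, 3)],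
  [(11, 0), (11, 5)], [(16, 0), (16, 6), (23, 5), (27, 4), (23, 3), (11, 2)], [(23, 0)],
  [(27, 0), (28, 1), (26, 2), (13, 4), (28, 3), (27, 4), (14, 5)],
  [(11, 0), (27, 5), (23, 4), (11, 3)], [(28, 7)], [(23, 0), (6, 2), (13, 1)],
  [(27, 0), (14, 1), (14, 5)],
  [(10, 3), (16, 1), (11, 0)], [(12, 0), (12, 5)], [(10, 0), (24, 4), (16, 2), (23, 1), (13, 7)],
  [(28, 0), (27, 1)],
  [(23, 7)], [(24, 5), (28, 4), (24, 1), (12, 0)], [(13, 0), (13, 5)],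
  [(7, 0), (28, 5), (24, 2), (28, 1), (7, 2), (14, 7)],
  [(11, 0), (23, 7), (11, 6)], [], [(23, 0), (13, 1), (13, 7)],
  [(27, 0), (7, 1), (28, 6), (24, 3), (28, 2), (27, 7), (23, 6), (6, 3), (14, 9)],
  [(27, 9), (10, 4), (28, 3), (16, 1), (11, 0)], [(12, 0), (28, 7), (12, 6)], [],
  [(28, 0), (27, 1), (14, 2), (14, 7)],
  [(10, 7), (28, 6), (24, 3), (16, 1), (11, 0)], [(12, 0), (12, 9)], [],
  [(28, 0), (27, 1), (7, 2), (28, 7), (24, 4), (28, 3), (27, 8), (23, 7), (6, 4), (28, 10),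
     (14, 11)],
  [(23, 11), (27, 10), (10, 5), (28, 4), (16, 2), (23, 1), (11, 0)], [], [(13, 0), (13, 9)],
  [(8, 0), (10, 2), (28, 1), (24, 6), (16, 4), (23, 3), (27, 2), (26, 10), (13, 9)],
  [], [(12, 0), (12, 11)], [(24, 0), (23, 3), (5, 5), (13, 4)],
  [(28, 0), (8, 1), (10, 3), (28, 2), (24, 7), (16, 5), (23, 4), (27, 3), (9, 11), (13, 10)],
  [(23, 13), (10, 8), (28, 7), (24, 4), (16, 2), (23, 1), (11, 0)],
  [(24, 11), (16, 9), (23, 8), (27, 7), (23, 6), (10, 1), (12, 0)], [(13, 0), (13, 11)], [],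
  [(11, 0), (11, 13)],
  [(16, 0), (16, 14), (23, 13), (27, 12), (10, 7), (28, 6), (16, 4), (23, 3), (11, 2)],
  [(23, 0), (24, 1), (23, 4), (3, 6), (13, 5)],
  [(27, 0), (28, 1), (8, 2), (10, 4), (28, 3), (24, 8), (16, 6), (23, 5), (27, 4), (8, 12),
     (13, 11)],
  [(27, 15), (23, 14), (10, 9), (28, 8), (24, 5), (16, 3), (23, 2), (27, 1), (11, 0)],
  [(28, 15), (24, 12), (16, 10), (23, 9), (27, 8), (23, 7), (10, 2), (28, 1), (12, 0)],
  [(0, 1), (13, 0)], [(14, 0), (14, 13)]]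

end F₄Certificate

namespace E₆Certificate

def derivation : List (List (Fin 6) × List (ℕ × ℕ) × List (ℕ × ℕ)) := [
  ([2, 1, 0], [(12, 1)], [(19, 0)]),
  ([3, 2, 3, 0], [(25, 2)], [(22, 0)]),
  ([3, 1, 3, 2, 3], [(23, 2)], [(17, 0)]),
  ([3, 2, 3, 1, 3], [(18, 2), (22, 1)], [(24, 0), (22, 2)]),
  ([3, 2, 0, 3, 1, 3], [(19, 3), (3, 1)], [(2, 0), (3, 2)]),
  ([4, 3, 4, 1], [(36, 2)], [(33, 0)]),
  ([4, 3, 4, 2], [(38, 2)], [(34, 0)]),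
  ([4, 3, 1, 4, 2], [(39, 3)], [(1, 0)]),
  ([4, 3, 1, 2, 4, 3, 4], [(36, 4)], [(0, 0)]),
  ([5, 4, 5, 3], [(48, 2)], [(44, 0)]),
  ([3, 1, 2, 3, 2, 0, 2], [(18, 4), (34, 3)], [(7, 0), (34, 4)]),
  ([4, 3, 2, 4, 0], [(41, 3)], [(4, 0)]),
  ([4, 3, 1, 2, 4, 0], [(42, 4)], [(4, 0)]),
  ([4, 3, 1, 2, 3, 4, 3, 0], [(37, 6), (43, 5), (37, 4)], [(4, 0), (43, 6), (37, 5)]),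
  ([5, 4, 3, 5, 1], [(51, 3)], [(4, 0)]),
  ([5, 4, 3, 5, 2], [(53, 3)], [(5, 0)]),
  ([4, 3, 1, 2, 0, 3, 4, 3, 2, 3], [(37, 7), (48, 6)], [(2, 0), (48, 7)]),
  ([5, 4, 3, 1, 5, 2], [(55, 4)], [(2, 0)]),
  ([5, 4, 3, 2, 5, 0], [(54, 4)], [(2, 0)]),
  ([4, 3, 1, 2, 0, 3, 2, 4, 3, 2, 1], [(38, 9)], [(2, 0)]),
  ([5, 4, 3, 1, 2, 5, 0], [(56, 5)], [(2, 0)]),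
  ([5, 4, 3, 1, 2, 5, 3], [(60, 5)], [(3, 0)]),
  ([5, 4, 3, 1, 2, 0, 5, 3], [(61, 6)], [(1, 0)]),
  ([5, 4, 3, 1, 2, 3, 5, 4, 5], [(58, 6)], [(1, 0)]),
  ([5, 4, 3, 1, 2, 0, 3, 5, 2], [(62, 7)], [(1, 0)]),
  ([5, 4, 3, 1, 2, 0, 3, 5, 4, 5], [(60, 7)], [(2, 0)]),
  ([5, 4, 3, 1, 2, 0, 3, 2, 5, 4, 5], [(61, 8)], [(1, 0)])]

def reflectionWords : List (List (Fin 6)) := [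
  [0], [1], [2], [3], [4], [5], [0, 2, 0], [1, 3, 1], [2, 3, 2], [3, 4, 3], [4, 5, 4],
  [0, 2, 3, 2, 0], [1, 2, 3, 1, 2], [1, 3, 4, 3, 1], [2, 3, 4, 3, 2], [3, 4, 5, 4, 3],
  [0, 1, 2, 3, 1, 2, 0], [0, 2, 3, 4, 3, 2, 0], [1, 2, 3, 4, 3, 1, 2], [1, 3, 4, 5, 4, 3, 1],
  [2, 3, 4, 5, 4, 3, 2], [0, 1, 2, 3, 4, 3, 1, 2, 0], [0, 2, 3, 4, 5, 4, 3, 2, 0],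
  [1, 2, 3, 4, 5, 4, 3, 1, 2], [3, 1, 2, 3, 4, 3, 1, 2, 3], [0, 1, 2, 3, 4, 5, 4, 3, 1, 2, 0],
  [0, 3, 1, 2, 3, 4, 3, 1, 2, 0, 3], [3, 1, 2, 3, 4, 5, 4, 3, 1, 2, 3],
  [0, 3, 1, 2, 3, 4, 5, 4, 3, 1, 2, 0, 3], [2, 0, 3, 1, 2, 3, 4, 3, 1, 2, 0, 3, 2],
  [4, 3, 1, 2, 3, 4, 5, 4, 3, 1, 2, 3, 4], [0, 4, 3, 1, 2, 3, 4, 5, 4, 3, 1, 2, 0, 3, 4],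
  [2, 0, 3, 1, 2, 3, 4, 5, 4, 3, 1, 2, 0, 3, 2],
  [2, 0, 4, 3, 1, 2, 3, 4, 5, 4, 3, 1, 2, 0, 3, 2, 4],
  [3, 2, 0, 4, 3, 1, 2, 3, 4, 5, 4, 3, 1, 2, 0, 3, 2, 4, 3],
  [1, 3, 2, 0, 4, 3, 1, 2, 3, 4, 5, 4, 3, 1, 2, 0, 3, 2, 4, 3, 1]]

def conjugationSteps : List (List (ℕ × ℕ)) := [
  [(27, 0)], [(39, 0), (28, 1)], [(35, 0)], [(51, 0), (30, 1)], [(57, 0), (31, 1)],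
  [(63, 0), (32, 1)],
  [(39, 1), (27, 0)], [(28, 0)], [(46, 0), (29, 1)], [(42, 0)], [(58, 0), (31, 1)],
  [(64, 0), (32, 1)],
  [], [(46, 1), (28, 0)], [(29, 0)], [(48, 0)], [(59, 0), (31, 1)], [(65, 0), (32, 1)],
  [(51, 1), (27, 0)], [], [], [(30, 0)], [(55, 0)], [(66, 0), (32, 1)],
  [(57, 1), (27, 0)], [(58, 1), (28, 0)], [(59, 1), (29, 0)], [], [(31, 0)], [(62, 0)],
  [(63, 1), (27, 0)], [(64, 1), (28, 0)], [(65, 1), (29, 0)], [(66, 1), (30, 0)], [], [(32, 0)],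
  [(27, 0), (27, 1)], [(39, 0), (26, 2), (28, 1)], [(35, 0), (27, 2), (29, 1)], [(51, 0), (25, 1)],
  [(57, 0), (59, 1), (57, 2), (31, 3)], [(63, 0), (65, 1), (63, 2), (32, 3)],
  [(39, 3), (51, 2), (39, 1), (27, 0)], [(28, 0), (28, 1)], [(46, 0)], [(42, 0), (28, 2), (30, 1)],
  [(58, 0), (21, 1)], [(64, 0), (66, 1), (64, 2), (32, 3)],
  [], [(46, 3)], [(29, 0), (29, 1)], [(48, 0), (29, 2), (30, 1)], [(59, 0), (20, 1)],
  [(65, 0), (66, 1), (65, 2), (32, 3)],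
  [(51, 3), (57, 2), (51, 1), (27, 0)], [], [], [(30, 0), (30, 1)], [(55, 0), (30, 2), (31, 1)],
  [(66, 0), (17, 1)],
  [(57, 3), (63, 2), (57, 1), (27, 0)], [(58, 3), (64, 2), (58, 1), (28, 0)],
  [(59, 3), (65, 2), (59, 1), (29, 0)], [], [(31, 0), (31, 1)], [(62, 0), (31, 2), (32, 1)],
  [(27, 0), (27, 3)], [(39, 0), (26, 4)], [(35, 0), (35, 4), (51, 3), (27, 2)],
  [(51, 0), (48, 1), (29, 3), (51, 2), (30, 3)], [(57, 0), (59, 1), (15, 2)],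
  [(63, 0), (65, 1), (66, 2), (65, 3), (63, 4), (32, 5)],
  [], [(28, 0), (46, 3), (28, 2)], [(46, 0), (29, 1), (29, 3)],
  [(23, 0), (24, 1), (46, 0), (30, 5)], [(58, 0), (59, 1), (19, 2)],
  [(64, 0), (65, 1), (66, 2), (64, 3), (65, 4), (32, 5)],
  [(39, 5), (51, 4), (57, 3), (51, 2), (39, 1), (27, 0)], [(28, 0), (28, 3)], [(46, 0)],
  [(42, 0), (42, 4), (58, 3), (28, 2)], [(58, 0), (55, 1), (30, 3), (58, 2), (31, 3)],
  [(64, 0), (66, 1), (12, 2)],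
  [], [(46, 5)], [(29, 0), (29, 3)], [(48, 0), (48, 4), (59, 3), (29, 2)],
  [(59, 0), (55, 1), (30, 3), (59, 2), (31, 3)], [(65, 0), (66, 1), (11, 2)],
  [(51, 5), (57, 4), (63, 3), (57, 2), (51, 1), (27, 0)], [], [], [(30, 0), (30, 3)],
  [(55, 0), (55, 4), (66, 3), (30, 2)], [(66, 0), (62, 1), (31, 3), (66, 2), (32, 3)],
  [(27, 0), (27, 5)], [(39, 0), (28, 1), (26, 4), (28, 3)],
  [(26, 0), (35, 1), (39, 0), (35, 6), (39, 5), (51, 4), (27, 3)],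
  [(51, 0), (23, 1), (24, 2), (46, 1), (51, 6), (30, 7)], [(57, 0), (58, 1), (59, 2), (14, 3)],
  [(63, 0), (64, 1), (65, 2), (66, 3), (64, 4), (65, 5), (63, 6), (32, 7)],
  [(27, 0), (27, 5)], [(39, 0), (26, 6)], [(35, 0), (35, 6), (51, 5), (57, 4), (51, 3), (27, 2)],
  [(51, 0), (48, 1), (25, 5), (59, 4), (29, 3)],
  [(57, 0), (59, 1), (55, 2), (30, 4), (59, 3), (57, 4), (31, 5)],
  [(63, 0), (65, 1), (66, 2), (8, 3)],
  [], [(28, 0), (46, 5), (28, 4)], [(46, 0), (29, 1), (29, 5)], [],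
  [(58, 0), (59, 1), (55, 2), (30, 4), (58, 3), (59, 4), (31, 5)],
  [(64, 0), (65, 1), (66, 2), (9, 3)],
  [(39, 7), (51, 6), (57, 5), (63, 4), (57, 3), (51, 2), (39, 1), (27, 0)], [(28, 0), (28, 5)],
  [(46, 0)], [(42, 0), (42, 6), (58, 5), (64, 4), (58, 3), (28, 2)],
  [(58, 0), (55, 1), (21, 5), (66, 4), (30, 3)],
  [(64, 0), (66, 1), (62, 2), (31, 4), (66, 3), (64, 4), (32, 5)],
  [], [(46, 7)], [(29, 0), (29, 5)], [(48, 0), (48, 6), (59, 5), (65, 4), (59, 3), (29, 2)],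
  [(59, 0), (55, 1), (20, 5), (66, 4), (30, 3)],
  [(65, 0), (66, 1), (62, 2), (31, 4), (66, 3), (65, 4), (32, 5)],
  [(27, 0), (27, 7)], [(39, 0), (28, 1), (26, 6), (28, 5)],
  [(26, 0), (35, 1), (39, 0), (35, 8), (39, 7), (51, 6), (57, 5), (51, 4), (27, 3)], [(51, 0)],
  [(57, 0), (58, 1), (59, 2), (55, 3), (30, 5), (58, 4), (59, 5), (57, 6), (31, 7)],
  [(63, 0), (64, 1), (65, 2), (66, 3), (6, 4)],
  [(27, 0), (27, 7)], [(39, 0), (26, 8)],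
  [(35, 0), (35, 8), (51, 7), (57, 6), (63, 5), (57, 4), (51, 3), (27, 2)],
  [(51, 0), (48, 1), (25, 7), (59, 6), (65, 5), (59, 4), (29, 3)],
  [(57, 0), (59, 1), (55, 2), (15, 6), (66, 5), (30, 4)],
  [(63, 0), (65, 1), (66, 2), (62, 3), (31, 5), (66, 4), (65, 5), (63, 6), (32, 7)],
  [], [(28, 0), (46, 7), (28, 6)], [(46, 0), (29, 1), (29, 7)], [],
  [(58, 0), (59, 1), (55, 2), (19, 6), (66, 5), (30, 4)],
  [(64, 0), (65, 1), (66, 2), (62, 3), (31, 5), (66, 4), (64, 5), (65, 6), (32, 7)],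
  [(51, 9)], [(23, 6), (59, 5), (24, 1), (28, 0)], [(24, 6), (58, 5), (23, 1), (29, 0)],
  [(30, 0), (30, 7)],
  [(18, 0), (58, 6), (23, 2), (59, 1), (59, 7), (24, 3), (58, 2), (46, 1), (18, 3), (31, 9)],
  [(66, 0), (64, 1), (65, 2), (66, 3), (5, 4)],
  [(27, 0), (27, 9)], [(39, 0), (28, 1), (26, 8), (28, 7)],
  [(26, 0), (35, 1), (39, 0), (35, 10), (39, 9), (51, 8), (57, 7), (63, 6), (57, 5), (51, 4),
     (27, 3)],
  [(51, 0)], [(57, 0), (58, 1), (59, 2), (55, 3), (14, 7), (66, 6), (30, 5)],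
  [(63, 0), (64, 1), (65, 2), (66, 3), (62, 4), (31, 6), (66, 5), (64, 6), (65, 7), (63, 8),
     (32, 9)],
  [(27, 0), (51, 9), (27, 8)], [(39, 0), (22, 7), (59, 6), (24, 2), (28, 1)], [],
  [(51, 0), (30, 1), (30, 9)],
  [(57, 0), (18, 1), (58, 7), (23, 3), (59, 2), (59, 8), (24, 4), (58, 3), (46, 2), (57, 9),
     (51, 8), (13, 4), (31, 11)],
  [(63, 0), (66, 1), (64, 2), (65, 3), (66, 4), (4, 5)],
  [(51, 11)], [(23, 8), (59, 7), (65, 6), (59, 5), (24, 1), (28, 0)],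
  [(24, 8), (58, 7), (64, 6), (58, 5), (23, 1), (29, 0)], [(30, 0), (30, 9)], [],
  [(66, 0), (64, 1), (65, 2), (66, 3), (62, 4), (31, 6), (66, 5), (64, 6), (65, 7), (66, 8),
     (32, 9)],
  [(27, 0), (51, 11), (27, 10)], [(39, 0), (22, 9), (59, 8), (65, 7), (59, 6), (24, 2), (28, 1)],
  [], [(51, 0), (30, 1), (30, 11)], [(57, 0)],
  [(63, 0), (66, 1), (64, 2), (65, 3), (66, 4), (62, 5), (31, 7), (66, 6), (64, 7), (65, 8),
     (63, 9), (66, 10), (32, 11)],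
  [(16, 8), (58, 7), (23, 3), (35, 1), (27, 0)],
  [(46, 13), (22, 8), (59, 7), (24, 3), (26, 1), (28, 0)], [(29, 0), (29, 11)],
  [(25, 0), (26, 2), (35, 3), (39, 2), (51, 1), (48, 12), (35, 10), (39, 9), (51, 8), (57, 7),
     (51, 6), (27, 5)],
  [(59, 0), (57, 1), (18, 2), (58, 8), (23, 4), (59, 3), (59, 9), (24, 5), (58, 4), (46, 3),
     (57, 10), (51, 9), (13, 5), (59, 12), (31, 13)],
  [(65, 0), (63, 1), (66, 2), (64, 3), (65, 4), (66, 5), (2, 6)],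
  [(57, 13), (51, 12)], [(58, 13), (23, 9), (59, 8), (65, 7), (59, 6), (24, 2), (58, 1), (28, 0)],
  [(59, 13), (24, 9), (58, 8), (64, 7), (58, 6), (23, 2), (59, 1), (29, 0)],
  [(18, 8), (66, 7), (18, 1), (30, 0)], [(31, 0), (31, 11)],
  [(3, 0), (66, 8), (18, 2), (66, 1), (64, 9), (58, 8), (23, 4), (59, 3), (65, 2), (65, 10),
     (59, 9), (24, 5), (58, 4), (64, 3), (46, 2), (66, 11), (18, 5), (66, 4), (3, 5), (32, 13)],
  [(27, 0), (57, 13), (51, 12), (27, 11)],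
  [(39, 0), (58, 15), (22, 10), (59, 9), (65, 8), (59, 7), (24, 3), (58, 2), (28, 1)], [(59, 15)],
  [(51, 0), (13, 9), (66, 8), (18, 2), (30, 1)], [(57, 0), (31, 1), (31, 13)],
  [(63, 0), (3, 1), (66, 9), (18, 3), (66, 2), (64, 10), (58, 9), (23, 5), (59, 4), (65, 3),
     (65, 11), (59, 10), (24, 6), (58, 5), (64, 4), (46, 3), (63, 12), (57, 11), (51, 10),
     (66, 13), (13, 6), (66, 5), (1, 6), (32, 15)],
  [(16, 10), (58, 9), (64, 8), (58, 7), (23, 3), (35, 1), (27, 0)],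
  [(46, 15), (22, 10), (59, 9), (65, 8), (59, 7), (24, 3), (26, 1), (28, 0)], [(29, 0), (29, 13)],
  [(25, 0), (26, 2), (35, 3), (39, 2), (51, 1), (48, 14), (35, 12), (39, 11), (51, 10), (57, 9),
     (63, 8), (57, 7), (51, 6), (27, 5)],
  [(59, 0), (57, 1)],
  [(65, 0), (63, 1), (66, 2), (64, 3), (65, 4), (66, 5), (62, 6), (31, 8), (66, 7), (64, 8),
     (65, 9), (63, 10), (66, 11), (65, 12), (32, 13)],
  [(57, 17), (16, 11), (58, 10), (64, 9), (58, 8), (23, 4), (59, 3), (35, 1), (27, 0)],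
  [(58, 17), (46, 16), (22, 11), (59, 10), (65, 9), (59, 8), (24, 4), (58, 3), (26, 1), (28, 0)],
  [(29, 0), (59, 15), (29, 14)], [], [(59, 0), (57, 1), (31, 2), (31, 15)],
  [(65, 0), (63, 1), (3, 2), (66, 10), (18, 4), (66, 3), (64, 11), (58, 10), (23, 6), (59, 5),
     (65, 4), (65, 12), (59, 11), (24, 7), (58, 6), (64, 5), (46, 4), (63, 13), (57, 12), (51, 11),
     (66, 14), (13, 7), (66, 6), (65, 15), (59, 14), (0, 7), (32, 17)],
  [(51, 19), (57, 18), (16, 12), (58, 11), (64, 10), (58, 9), (23, 5), (59, 4), (35, 2), (51, 1),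
     (27, 0)],
  [], [(10, 11), (66, 10), (18, 4), (25, 1), (29, 0)], [(30, 0), (30, 17)],
  [(15, 0), (25, 2), (59, 1), (26, 4), (35, 5), (39, 4), (51, 3), (57, 2), (55, 18), (48, 16),
     (35, 14), (39, 13), (51, 12), (57, 11), (63, 10), (57, 9), (51, 8), (27, 7)],
  [(66, 0), (65, 1), (63, 2), (3, 3), (66, 11), (18, 5), (66, 4), (64, 12), (58, 11), (23, 7),
     (59, 6), (65, 5), (65, 13), (59, 12), (24, 8), (58, 7), (64, 6), (46, 5), (63, 14), (57, 13),
     (51, 12), (66, 15), (13, 8), (66, 7), (65, 16), (59, 15), (0, 8), (66, 18), (32, 19)],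
  [(39, 21), (51, 20), (57, 19), (16, 13), (58, 12), (64, 11), (58, 10), (23, 6), (59, 5),
     (35, 3), (51, 2), (39, 1), (27, 0)],
  [(28, 0), (28, 19)], [(46, 0), (7, 12), (66, 11), (18, 5), (25, 2), (29, 1)],
  [(42, 0), (42, 20), (58, 19), (46, 18), (22, 13), (59, 12), (65, 11), (59, 10), (24, 6),
     (58, 5), (26, 3), (28, 2)],
  [(58, 0), (15, 1), (25, 3), (59, 2), (26, 5), (35, 6), (39, 5), (51, 4), (57, 3), (21, 19),
     (48, 17), (35, 15), (39, 14), (51, 13), (57, 12), (63, 11), (57, 10), (51, 9), (27, 8)],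
  [(64, 0), (66, 1), (65, 2), (63, 3), (3, 4), (66, 12), (18, 6), (66, 5), (64, 13), (58, 12),
     (23, 8), (59, 7), (65, 6), (65, 14), (59, 13), (24, 9), (58, 8), (64, 7), (46, 6), (63, 15),
     (57, 14), (51, 13), (66, 16), (13, 9), (66, 8), (65, 17), (59, 16), (0, 9), (66, 19),
     (64, 20), (32, 21)]]

end E₆Certificate

namespace H₃Certificate

def derivation : List (List (Fin 3) × List (ℕ × ℕ) × List (ℕ × ℕ)) := [
  ([2, 1, 2, 1, 2, 0], [(9, 4)], [(8, 0)]),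
  ([2, 1, 2, 1, 0, 2, 1, 2, 1, 2], [(9, 5), (5, 3), (10, 2)], [(0, 0), (5, 4), (10, 3)]),
  ([2, 1, 2, 1, 0, 2, 1, 0, 2, 1, 0, 2, 1, 2, 1],
    [(0, 5), (6, 3), (11, 2)],
    [(1, 0), (6, 4), (11, 3), (2, 6), (1, 4), (6, 2), (11, 1), (6, 8), (11, 7)]),
  ([2, 1, 0, 2, 1, 0, 2, 1, 2, 1, 0, 1], [(7, 9), (12, 8)], [(1, 0), (12, 9)])]

def reflectionWords : List (List (Fin 3)) := [
  [0], [1], [2], [0, 1, 0], [1, 2, 1], [2, 1, 2], [0, 1, 2, 1, 0], [0, 2, 1, 0, 2],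
  [1, 2, 1, 2, 1], [0, 1, 2, 1, 2, 1, 0], [1, 0, 2, 1, 0, 2, 1], [0, 1, 0, 2, 1, 0, 2, 1, 0],
  [2, 1, 0, 2, 1, 0, 2, 1, 2], [0, 2, 1, 0, 2, 1, 0, 2, 1, 0, 2],
  [1, 0, 2, 1, 0, 2, 1, 0, 2, 1, 0, 2, 1]]

def conjugationSteps : List (List (ℕ × ℕ)) := [
  [(4, 0)], [(8, 0)], [(13, 0), (6, 1)],
  [], [(5, 0)], [],
  [(13, 1), (4, 0)], [], [(6, 0)],
  [(4, 0), (4, 1)], [(8, 0), (4, 2), (5, 1)], [(13, 0)],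
  [], [(5, 0), (5, 1)], [(12, 0)],
  [(13, 3)], [], [(6, 0), (6, 1)],
  [(4, 0), (4, 3)], [(8, 0), (8, 4), (13, 3), (4, 2)], [(13, 0), (3, 1)],
  [(4, 0), (13, 3), (4, 2)], [], [(13, 0), (6, 1), (6, 3)],
  [], [(5, 0), (5, 3)], [(12, 0), (5, 4), (6, 3)],
  [(4, 0), (4, 5)], [(8, 0), (8, 6), (13, 5)], [(13, 0), (12, 1), (5, 5), (13, 4), (6, 5)],
  [], [(5, 0), (5, 5)], [],
  [(4, 0), (4, 7)], [(8, 0), (4, 2), (8, 6), (13, 5), (4, 4)], [(13, 0)],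
  [(13, 9)], [(2, 1), (5, 0)], [(6, 0), (6, 7)],
  [(4, 0), (13, 9), (4, 8)], [], [(13, 0), (6, 1), (6, 9)],
  [(0, 3), (8, 1), (4, 0)], [(5, 0), (5, 11)], [(1, 0)]]

end H₃Certificate

set_option maxRecDepth 100000 in
/-- Bounds on the discrete Ricci curvature of the Hasse diagrams of the strong Bruhat
order of the exceptional Coxeter groups `F₄`, `E₆` and `H₃`. -/
theorem ric_hasse_exceptional :
    ((-28 : ℝ) : EReal) ≤ graphRic CoxeterMatrix.F₄.toCoxeterSystem.bruhatHasse ∧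
    ((-46 : ℝ) : EReal) ≤ graphRic CoxeterMatrix.E₆.toCoxeterSystem.bruhatHasse ∧
    ((-14 : ℝ) : EReal) ≤ graphRic CoxeterMatrix.H₃.toCoxeterSystem.bruhatHasse :=
  ⟨le_graphRic_bruhatHasse_of_certificate _ F₄Certificate.derivation
      F₄Certificate.reflectionWords F₄Certificate.conjugationSteps (by decide) (by decide)
      (by norm_num [F₄Certificate.reflectionWords]),
    le_graphRic_bruhatHasse_of_certificate _ E₆Certificate.derivation
      E₆Certificate.reflectionWords E₆Certificate.conjugationSteps (by decide) (by decide)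
      (by norm_num [E₆Certificate.reflectionWords]),
    le_graphRic_bruhatHasse_of_certificate _ H₃Certificate.derivation
      H₃Certificate.reflectionWords H₃Certificate.conjugationSteps (by decide) (by decide)
      (by norm_num [H₃Certificate.reflectionWords])⟩
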